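/- arXiv:2011.03458 — 3 statements merged into one kernel-verified Lean document; each statement's English description precedes it below -/
import Mathlib

section
/- Let n : ℕ and let I ∈ MvPolynomial (Fin (n+1)) ℚ. Then I is a semi-invariant of the binary n-form, i.e. φ(I) = ι(I), if and only if D(I) = 0. -/
open MvPolynomial

/-- The operator `D(I) = Σ_{i=1}^{n} i · a_{i-1} · ∂I/∂a_i`. -/
noncomputable def Dop (n : ℕ) :
    MvPolynomial (Fin (n+1)) ℚ →ₗ[ℚ] MvPolynomial (Fin (n+1)) ℚ :=
  ∑ i : Fin n, ((i : ℚ) + 1) •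
    ((LinearMap.mulLeft ℚ (X i.castSucc)).comp (pderiv i.succ).toLinearMap)

/-- The operator `Δ(I) = Σ_{i=0}^{n-1} (n-i) · a_{i+1} · ∂I/∂a_i`. -/
noncomputable def Δop (n : ℕ) :
    MvPolynomial (Fin (n+1)) ℚ →ₗ[ℚ] MvPolynomial (Fin (n+1)) ℚ :=
  ∑ i : Fin n, ((n : ℚ) - (i : ℚ)) •
    ((LinearMap.mulLeft ℚ (X i.succ)).comp (pderiv i.castSucc).toLinearMap)

/-- `Q_n(k,m)`: span of monomials of degree `k` and weight `m`. -/
noncomputable def Qspace (n k m : ℕ) : Submodule ℚ (MvPolynomial (Fin (n+1)) ℚ) :=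
  Submodule.span ℚ { p | ∃ ν : Fin (n+1) →₀ ℕ,
    (∑ i : Fin (n+1), ν i) = k ∧ (∑ i : Fin (n+1), (i : ℕ) * ν i) = m ∧ p = monomial ν (1 : ℚ) }

/-- `S_n(k,m)`: semi-invariants of degree `k` and weight `m`. -/
noncomputable def Sspace (n k m : ℕ) : Submodule ℚ (MvPolynomial (Fin (n+1)) ℚ) :=
  Qspace n k m ⊓ LinearMap.ker (Dop n)

/-- `p(k,n,m)`: number of partitions of `m` in a `k × n` rectangle. -/
def pRect (k n m : ℕ) : ℕ :=
  (Finset.univ.filter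
    (fun P : Nat.Partition m => Multiset.card P.parts ≤ k ∧ ∀ x ∈ P.parts, x ≤ n)).card

/-- Coefficient embedding `ℚ[a] → ℚ[z][a]`. -/
noncomputable def ιmap (n : ℕ) :
    MvPolynomial (Fin (n+1)) ℚ →+* MvPolynomial (Fin (n+1)) (Polynomial ℚ) :=
  MvPolynomial.map (Polynomial.C)

/-- The shear substitution `a_i ↦ a_i' = Σ_{j=0}^{i} C(i,j) a_{i-j} z^j`. -/
noncomputable def φmap (n : ℕ) :
    MvPolynomial (Fin (n+1)) ℚ →ₐ[ℚ] MvPolynomial (Fin (n+1)) (Polynomial ℚ) :=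
  aeval (fun i : Fin (n+1) => ∑ j ∈ Finset.range ((i : ℕ) + 1),
    (C ((Nat.choose (i : ℕ) j : Polynomial ℚ) * Polynomial.X ^ j)) *
      X (⟨(i : ℕ) - j, Nat.lt_of_le_of_lt (Nat.sub_le _ _) i.isLt⟩ : Fin (n+1)))

/-- The vertical shear substitution `a_i ↦ a_i'' = Σ_{j=0}^{n-i} C(n-i,j) a_{i+j} z^j`. -/
noncomputable def ψmap (n : ℕ) :
    MvPolynomial (Fin (n+1)) ℚ →ₐ[ℚ] MvPolynomial (Fin (n+1)) (Polynomial ℚ) :=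
  aeval (fun i : Fin (n+1) => ∑ j ∈ (Finset.range (n - (i : ℕ) + 1)).attach,
    (C ((Nat.choose (n - (i : ℕ)) j.1 : Polynomial ℚ) * Polynomial.X ^ j.1)) *
      X (⟨(i : ℕ) + j.1, by
        have h1 := Finset.mem_range.mp j.2
        have h2 := i.isLt
        omega⟩ : Fin (n+1)))

/-- The weighted total degree of `I`: max of `Σ_i i·ν_i` over monomials of `I`. -/
def wdeg (n : ℕ) (I : MvPolynomial (Fin (n+1)) ℚ) : ℕ :=
  I.support.sup (fun ν => ∑ i : Fin (n+1), (i : ℕ) * ν i)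

/-!
Differentiating `I(a_0', …, a_n')` with respect to `z` gives `(D I)(a_0', …, a_n')`, because
`d a_i'/dz = i · a_{i-1}'`. So if `I` is a semi-invariant, then `(D I)(a') = 0`, and setting `z = 0`
(where `a' = a`) gives `D I = 0`. Conversely, if `D I = 0` then `I(a')` has zero `z`-derivative, so over
`ℚ` it is constant in `z`, equal to its value `I(a)` at `z = 0`.
-/

open MvPolynomial Polynomial

namespace MvPolynomial

variable {σ R : Type*} [CommSemiring R]

/-- Differentiation in the variable of the coefficient ring `R[X]`. -/
noncomputable def coeffDerivative (σ R : Type*) [CommSemiring R] :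
    MvPolynomial σ R[X] →ₗ[R] MvPolynomial σ R[X] :=
  (AddMonoidAlgebra.coeffLinearEquiv R).symm.toLinearMap ∘ₗ
    Finsupp.mapRange.linearMap (derivative : R[X] →ₗ[R] R[X]) ∘ₗ
    (AddMonoidAlgebra.coeffLinearEquiv R).toLinearMap

@[simp]
theorem coeff_coeffDerivative (ν : σ →₀ ℕ) (x : MvPolynomial σ R[X]) :
    coeff ν (coeffDerivative σ R x) = derivative (coeff ν x) := rfl

theorem coeffDerivative_monomial (ν : σ →₀ ℕ) (p : R[X]) :
    coeffDerivative σ R (monomial ν p) = monomial ν (derivative p) := by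
  classical
  ext μ
  simp only [coeff_coeffDerivative, coeff_monomial]
  split_ifs <;> simp

theorem coeffDerivative_C (p : R[X]) :
    coeffDerivative σ R (MvPolynomial.C p) = MvPolynomial.C (derivative p) :=
  coeffDerivative_monomial 0 p

theorem coeffDerivative_mul (x y : MvPolynomial σ R[X]) :
    coeffDerivative σ R (x * y) = coeffDerivative σ R x * y + x * coeffDerivative σ R y := by
  induction x using MvPolynomial.induction_on' with
  | monomial ν p =>
    induction y using MvPolynomial.induction_on' with
    | monomial μ q =>
      simp only [monomial_mul, coeffDerivative_monomial, derivative_mul, map_add]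
    | add y z hy hz => simp only [mul_add, map_add, hy, hz]; ring
  | add x z hx hz => simp only [add_mul, map_add, hx, hz]; ring

@[simp]
theorem coeffDerivative_X (i : σ) : coeffDerivative σ R (X i) = 0 := by
  rw [X, coeffDerivative_monomial, derivative_one, monomial_zero]

theorem coeffDerivative_C_mul_X (p : R[X]) (i : σ) :
    coeffDerivative σ R (MvPolynomial.C p * X i) = MvPolynomial.C (derivative p) * X i := by
  rw [coeffDerivative_mul, coeffDerivative_C, coeffDerivative_X, mul_zero, add_zero]

theorem coeffDerivative_map_C (x : MvPolynomial σ R) :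
    coeffDerivative σ R (map Polynomial.C x) = 0 := by
  ext μ
  simp [coeff_map]

theorem eq_map_C_of_coeffDerivative_eq_zero [IsAddTorsionFree R] {x : MvPolynomial σ R[X]}
    (h : coeffDerivative σ R x = 0) : x = map Polynomial.C (map (evalRingHom 0) x) := by
  ext μ : 1
  have hμ : derivative (coeff μ x) = 0 := by rw [← coeff_coeffDerivative, h, coeff_zero]
  rw [coeff_map, coeff_map, coe_evalRingHom, ← coeff_zero_eq_eval_zero]
  exact eq_C_of_derivative_eq_zero hμ

end MvPolynomial

theorem Polynomial.derivative_choose_succ_mul_X_pow {R : Type*} [CommSemiring R] (m k : ℕ) :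
    derivative (((m + 1).choose (k + 1) : R[X]) * X ^ (k + 1)) =
      (m + 1 : R[X]) * ((m.choose k : R[X]) * X ^ k) := by
  rw [derivative_natCast_mul, derivative_X_pow, ← mul_assoc, ← mul_assoc]
  congr 1
  have := Nat.add_one_mul_choose_eq m k
  norm_num
  exact_mod_cast congrArg (Nat.cast : ℕ → R[X]) this.symm

theorem Dop_mul (n : ℕ) (p q : MvPolynomial (Fin (n+1)) ℚ) :
    Dop n (p * q) = Dop n p * q + p * Dop n q := by
  simp only [Dop, LinearMap.sum_apply, LinearMap.smul_apply, LinearMap.coe_comp,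
    Function.comp_apply, Derivation.coeFn_coe, LinearMap.mulLeft_apply, pderiv_mul,
    smul_add, mul_add, Finset.sum_add_distrib, Finset.sum_mul, Finset.mul_sum]
  congr 1 <;> refine Finset.sum_congr rfl fun _ _ => ?_ <;>
    simp only [MvPolynomial.smul_eq_C_mul] <;> ring

theorem Dop_C (n : ℕ) (q : ℚ) : Dop n (MvPolynomial.C q) = 0 := by
  simp [Dop]

-- For `j = 0` the coefficient vanishes, so the truncated index `0 - 1 = 0` is harmless.
theorem Dop_X (n : ℕ) (j : Fin (n+1)) :
    Dop n (X j) = (j : ℚ) • X ⟨j - 1, by omega⟩ := by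
  simp only [Dop, LinearMap.sum_apply, LinearMap.smul_apply, LinearMap.coe_comp,
    Function.comp_apply, Derivation.coeFn_coe, LinearMap.mulLeft_apply, pderiv_X]
  cases j using Fin.cases with
  | zero => simp [Fin.succ_ne_zero]
  | succ i =>
    rw [Finset.sum_eq_single i]
    · simp only [Pi.single_eq_same, mul_one, Fin.val_succ, Nat.cast_add, Nat.cast_one,
        add_tsub_cancel_right]
      rfl
    · intro b _ hb; simp [hb.symm]
    · simp

theorem φmap_X (n : ℕ) (j : Fin (n+1)) :
    φmap n (X j) = ∑ k ∈ Finset.range (j + 1),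
      MvPolynomial.C ((j.val.choose k : ℚ[X]) * Polynomial.X ^ k) * X ⟨j - k, by omega⟩ :=
  aeval_X _ _

theorem map_evalRingHom_zero_φmap (n : ℕ) (I : MvPolynomial (Fin (n+1)) ℚ) :
    map (evalRingHom 0) (φmap n I) = I := by
  induction I using MvPolynomial.induction_on with
  | C q => simp [φmap]
  | add p q hp hq => rw [map_add, map_add, hp, hq]
  | mul_X p j ih =>
    rw [map_mul, map_mul, ih, φmap_X, map_sum, Finset.sum_range_succ']
    simp

theorem coeffDerivative_φmap_X (n : ℕ) (j : Fin (n+1)) :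
    coeffDerivative _ ℚ (φmap n (X j)) = φmap n (Dop n (X j)) := by
  obtain ⟨_ | m, hm⟩ := j
  · simp [φmap_X, Dop_X]
  · rw [Dop_X, map_smul, φmap_X, φmap_X, map_sum, Finset.sum_range_succ', Finset.smul_sum]
    simp only [coeffDerivative_C_mul_X, derivative_choose_succ_mul_X_pow, Nat.choose_zero_right,
      pow_zero, mul_one, Nat.cast_one, derivative_one, map_zero, zero_mul, add_zero,
      Nat.add_sub_cancel, Nat.add_sub_add_right, Nat.cast_smul_eq_nsmul]
    refine Finset.sum_congr rfl fun k _ => ?_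
    rw [map_mul, mul_assoc, nsmul_eq_mul]
    simp

theorem coeffDerivative_φmap (n : ℕ) (I : MvPolynomial (Fin (n+1)) ℚ) :
    coeffDerivative _ ℚ (φmap n I) = φmap n (Dop n I) := by
  induction I using MvPolynomial.induction_on with
  | C q => simp [φmap, coeffDerivative_C, Dop_C]
  | add p q hp hq => simp only [map_add, hp, hq]
  | mul_X p j ih =>
    rw [map_mul, coeffDerivative_mul, ih, coeffDerivative_φmap_X, Dop_mul, map_add, map_mul,
      map_mul]

/-- `I` is a semi-invariant iff `D(I) = 0`. -/
theorem semiInvariant_iff_D_eq_zero (n : ℕ) (I : MvPolynomial (Fin (n+1)) ℚ) :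
    φmap n I = ιmap n I ↔ Dop n I = 0 := by
  have hφ := map_evalRingHom_zero_φmap n
  constructor
  · intro h
    have hD : φmap n (Dop n I) = 0 := by
      rw [← coeffDerivative_φmap, h]
      exact coeffDerivative_map_C I
    exact Function.LeftInverse.injective hφ (hD.trans (map_zero _).symm)
  · intro h
    have hconst : coeffDerivative _ ℚ (φmap n I) = 0 := by rw [coeffDerivative_φmap, h, map_zero]
    rw [eq_map_C_of_coeffDerivative_eq_zero hconst, hφ]
    rfl
end

section
/- Let n, k : ℕ and let m : ℕ satisfy 1 ≤ m and 2m ≤ nk. Then the operator Δ is injective on Q_n(k,m−1): it maps Q_n(k,m−1) into Q_n(k,m), and for every I ∈ Q_n(k,m−1), Δ(I) = 0 implies I = 0. -/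
open MvPolynomial

/-!
`Δ`, `D = Σ (i+1) a_i ∂/∂a_{i+1}` and `H = Σ_j (2j - n) a_j ∂/∂a_j` are derivations forming an
`sl₂`-triple: `⁅Δ, D⁆ = H`, `⁅H, Δ⁆ = 2Δ`, `⁅H, D⁆ = -2D`. On `Q_n(k,w)` the operator `H` is the
scalar `2w - nk`, while `Δ` raises and `D` lowers the weight by one, so `D^(w+1)` kills `Q_n(k,w)`.
A nonzero `I ∈ Q_n(k,m-1)` with `Δ I = 0` would thus be a primitive vector on which `D` is
nilpotent, and the `sl₂` string through it forces its `H`-eigenvalue `2(m-1) - nk` to be a natural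
number; but `2m ≤ nk` makes it negative.
-/

namespace Derivation

variable {R A ι κ : Type*} [CommRing R] [CommRing A] [Algebra R A]

theorem finset_sum_apply {M : Type*} [AddCommMonoid M] [Module A M] [Module R M] (s : Finset ι)
    (D : ι → Derivation R A M) (a : A) : (∑ i ∈ s, D i) a = ∑ i ∈ s, D i a := by
  rw [← coeFnAddMonoidHom_apply, map_sum, Finset.sum_apply]
  rfl

/- `sum_lie_sum`, `lie_sum` and `lie_smul`, restated for the bracket, sum and scalar action of
`Derivation` itself: `rw` does not identify these with the ones of its `LieAlgebra` instance. -/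

theorem sum_lie_sum (s : Finset ι) (t : Finset κ) (D : ι → Derivation R A A)
    (E : κ → Derivation R A A) : ⁅∑ i ∈ s, D i, ∑ j ∈ t, E j⁆ = ∑ i ∈ s, ∑ j ∈ t, ⁅D i, E j⁆ :=
  _root_.sum_lie_sum (L := Derivation R A A) s t D E

theorem lie_sum (D : Derivation R A A) (t : Finset κ) (E : κ → Derivation R A A) :
    ⁅D, ∑ j ∈ t, E j⁆ = ∑ j ∈ t, ⁅D, E j⁆ :=
  _root_.lie_sum (L := Derivation R A A) t E D

theorem lie_smul (r : R) (D E : Derivation R A A) : ⁅D, r • E⁆ = r • ⁅D, E⁆ :=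
  _root_.lie_smul (L := Derivation R A A) r D E

theorem smul_lie_smul (r s : R) (D E : Derivation R A A) :
    ⁅r • D, s • E⁆ = (r * s) • ⁅D, E⁆ := by
  ext a
  simp only [commutator_apply, smul_apply, map_smul, smul_smul, smul_sub, mul_comm]

end Derivation

namespace MvPolynomial

variable {σ : Type*} (R : Type*) [CommRing R]

noncomputable def polarization (a b : σ) : Derivation R (MvPolynomial σ R) (MvPolynomial σ R) :=
  (X a : MvPolynomial σ R) • pderiv b

variable {R}

theorem polarization_apply (a b : σ) (p : MvPolynomial σ R) :
    polarization R a b p = X a * pderiv b p := rfl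

theorem polarization_X [DecidableEq σ] (a b j : σ) :
    polarization R a b (X j) = if b = j then X a else 0 := by
  simp [polarization_apply, pderiv_X, Pi.single_apply, eq_comm]

theorem polarization_monomial (a b : σ) (ν : σ →₀ ℕ) (r : R) :
    polarization R a b (monomial ν r) =
      (ν b : R) • monomial (ν - Finsupp.single b 1 + Finsupp.single a 1) r := by
  rw [polarization_apply, pderiv_monomial, X, monomial_mul, one_mul, add_comm, smul_monomial,
    smul_eq_mul, mul_comm]

theorem polarization_self_monomial (a : σ) (ν : σ →₀ ℕ) (r : R) :
    polarization R a a (monomial ν r) = (ν a : R) • monomial ν r := by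
  rw [polarization_monomial]
  rcases eq_or_ne (ν a) 0 with h | h
  · simp [h]
  · rw [tsub_add_cancel_of_le (Finsupp.single_le_iff.mpr (Nat.one_le_iff_ne_zero.mpr h))]

theorem lie_polarization [DecidableEq σ] (a b c d : σ) :
    ⁅polarization R a b, polarization R c d⁆ =
      (if b = c then polarization R a d else 0) - if d = a then polarization R c b else 0 := by
  refine derivation_ext fun j => ?_
  rw [Derivation.commutator_apply, polarization_X c d, polarization_X a b]
  split_ifs <;> subst_vars <;> simp_all [polarization_X]

variable [Fintype σ]

noncomputable def euler (ω : σ → R) : Derivation R (MvPolynomial σ R) (MvPolynomial σ R) :=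
  ∑ j, ω j • polarization R j j

theorem euler_monomial (ω : σ → R) (ν : σ →₀ ℕ) (r : R) :
    euler ω (monomial ν r) = (∑ j, ω j * ν j) • monomial ν r := by
  simp only [euler, Derivation.finset_sum_apply, Derivation.smul_apply,
    polarization_self_monomial, smul_smul, Finset.sum_smul]

theorem euler_X [DecidableEq σ] (ω : σ → R) (j : σ) : euler ω (X j) = ω j • X j := by
  simp [euler, Derivation.finset_sum_apply, polarization_X]

theorem lie_euler_polarization [DecidableEq σ] (ω : σ → R) (a b : σ) :
    ⁅euler ω, polarization R a b⁆ = (ω a - ω b) • polarization R a b := by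
  refine derivation_ext fun j => ?_
  rw [Derivation.commutator_apply, euler_X, polarization_X]
  split_ifs <;> simp [euler_X, sub_smul, polarization_X, *]

end MvPolynomial

theorem Fin.sum_smul_succ_sub_castSucc {R M : Type*} [Ring R] [AddCommGroup M] [Module R M]
    {n : ℕ} (G : ℕ → R) (hG₀ : G 0 = 0) (hG : G (n + 1) = 0) (v : Fin (n + 1) → M) :
    ∑ i : Fin n, G (i + 1) • (v i.succ - v i.castSucc) =
      ∑ j : Fin (n + 1), (G j - G (j + 1)) • v j := by
  simp only [smul_sub, sub_smul, Finset.sum_sub_distrib]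
  rw [Fin.sum_univ_succ (fun j : Fin (n + 1) => G j • v j),
    Fin.sum_univ_castSucc (fun j : Fin (n + 1) => G (j + 1) • v j)]
  simp [hG₀, hG]

theorem IsSl2Triple.HasPrimitiveVectorWith.exists_nat_of_pow_toEnd_f_eq_zero
    {R L M : Type*} [CommRing R] [LieRing L] [LieAlgebra R L]
    [AddCommGroup M] [Module R M] [LieRingModule L M] [LieModule R L M]
    [IsDomain R] [CharZero R] [Module.IsTorsionFree R M]
    {h e f : L} {t : IsSl2Triple h e f} {m : M} {μ : R} (P : t.HasPrimitiveVectorWith m μ)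
    {N : ℕ} (hN : (LieModule.toEnd R L M f ^ N) m = 0) : ∃ n : ℕ, μ = n := by
  obtain ⟨n, hn₁, hn₂⟩ := Nat.exists_not_and_succ_of_not_zero_of_exists
    (p := fun n => (LieModule.toEnd R L M f ^ n) m = 0) (by simpa using P.ne_zero) ⟨N, hN⟩
  refine ⟨n, ?_⟩
  have := P.lie_e_pow_succ_toEnd_f n
  rw [hn₂, lie_zero, eq_comm, smul_eq_zero_iff_left hn₁, mul_eq_zero, sub_eq_zero] at this
  exact this.resolve_left <| Nat.cast_add_one_ne_zero n

theorem Finsupp.sum_mul_tsub_single_add_single {σ : Type*} [Fintype σ] [DecidableEq σ]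
    (f : σ → ℕ) {ν : σ →₀ ℕ} {a b : σ} (hb : ν b ≠ 0) :
    ∑ i, f i * (ν - Finsupp.single b 1 + Finsupp.single a 1 : σ →₀ ℕ) i + f b =
      ∑ i, f i * ν i + f a := by
  have add_single (μ : σ →₀ ℕ) (c : σ) :
      ∑ i, f i * (μ + Finsupp.single c 1 : σ →₀ ℕ) i = ∑ i, f i * μ i + f c := by
    simp [mul_add, Finset.sum_add_distrib, Finsupp.single_apply]
  have hν : ν - Finsupp.single b 1 + Finsupp.single b 1 = ν :=
    tsub_add_cancel_of_le (Finsupp.single_le_iff.mpr (Nat.one_le_iff_ne_zero.mpr hb))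
  conv_rhs => rw [← hν]
  rw [add_single, add_single, add_right_comm]

section

variable (n : ℕ)

noncomputable def Δder :
    Derivation ℚ (MvPolynomial (Fin (n + 1)) ℚ) (MvPolynomial (Fin (n + 1)) ℚ) :=
  ∑ i : Fin n, ((n : ℚ) - i) • polarization ℚ i.succ i.castSucc

noncomputable def Dder :
    Derivation ℚ (MvPolynomial (Fin (n + 1)) ℚ) (MvPolynomial (Fin (n + 1)) ℚ) :=
  ∑ i : Fin n, ((i : ℚ) + 1) • polarization ℚ i.castSucc i.succ

noncomputable def Hder :
    Derivation ℚ (MvPolynomial (Fin (n + 1)) ℚ) (MvPolynomial (Fin (n + 1)) ℚ) :=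
  euler fun j : Fin (n + 1) => 2 * (j : ℚ) - n

theorem Δop_apply (p : MvPolynomial (Fin (n + 1)) ℚ) : Δop n p = Δder n p := by
  simp [Δop, Δder, Derivation.finset_sum_apply, polarization_apply]

theorem lie_Δder_Dder : ⁅Δder n, Dder n⁆ = Hder n := by
  rw [Δder, Dder, Derivation.sum_lie_sum]
  simp only [Derivation.smul_lie_smul, lie_polarization, Fin.castSucc_inj, Fin.succ_inj, smul_sub,
    smul_ite, smul_zero, Finset.sum_sub_distrib, Finset.sum_ite_eq, Finset.sum_ite_eq',
    Finset.mem_univ, if_true]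
  rw [← Finset.sum_sub_distrib, Hder, euler]
  simp_rw [← smul_sub]
  -- `(n - i) (i + 1) = G (i + 1)` for `G t = t (n + 1 - t)`, which vanishes at `0` and `n + 1`.
  convert Fin.sum_smul_succ_sub_castSucc (fun t : ℕ => (t : ℚ) * (n + 1 - t)) (by simp)
    (by push_cast; ring) (fun j => polarization ℚ j j) using 2
  all_goals congr 1; push_cast; ring

theorem lie_Hder_Δder : ⁅Hder n, Δder n⁆ = (2 : ℚ) • Δder n := by
  rw [Δder, Derivation.lie_sum, Finset.smul_sum]
  refine Finset.sum_congr rfl fun i _ => ?_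
  rw [Derivation.lie_smul, Hder, lie_euler_polarization, smul_comm]
  congr 1
  simp only [Fin.val_succ, Fin.val_castSucc]
  push_cast
  ring

theorem lie_Hder_Dder : ⁅Hder n, Dder n⁆ = -((2 : ℚ) • Dder n) := by
  rw [Dder, Derivation.lie_sum, Finset.smul_sum, ← Finset.sum_neg_distrib]
  refine Finset.sum_congr rfl fun i _ => ?_
  rw [Derivation.lie_smul, Hder, lie_euler_polarization, smul_comm, ← neg_smul]
  congr 1
  simp only [Fin.val_succ, Fin.val_castSucc]
  push_cast
  ring

theorem Hder_ne_zero (hn : n ≠ 0) : Hder n ≠ 0 := by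
  intro h
  have := congrArg (· (X 0)) h
  simp [Hder, euler_X, hn, X_ne_zero] at this

theorem isSl2Triple (hn : n ≠ 0) : IsSl2Triple (Hder n) (Δder n) (Dder n) where
  h_ne_zero := Hder_ne_zero n hn
  lie_e_f := lie_Δder_Dder n
  lie_h_e_nsmul := (lie_Hder_Δder n).trans (ofNat_smul_eq_nsmul ℚ 2 _)
  lie_h_f_nsmul := (lie_Hder_Dder n).trans (congrArg _ (ofNat_smul_eq_nsmul ℚ 2 _))

variable {n} {k w w' : ℕ}

theorem Qspace_le_of_monomial_mem {N : Submodule ℚ (MvPolynomial (Fin (n + 1)) ℚ)}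
    (h : ∀ ν : Fin (n + 1) →₀ ℕ, ∑ i, ν i = k → ∑ i : Fin (n + 1), (i : ℕ) * ν i = w →
      monomial ν 1 ∈ N) :
    Qspace n k w ≤ N :=
  Submodule.span_le.mpr <| by
    rintro _ ⟨ν, hk, hw, rfl⟩
    exact h ν hk hw

theorem polarization_mem_Qspace {a b : Fin (n + 1)} (hw : w' + b = w + a)
    {p : MvPolynomial (Fin (n + 1)) ℚ} (hp : p ∈ Qspace n k w) :
    polarization ℚ a b p ∈ Qspace n k w' := by
  refine Qspace_le_of_monomial_mem (N := (Qspace n k w').comap (polarization ℚ a b).toLinearMap)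
    (fun ν hk hν => ?_) hp
  rw [Submodule.mem_comap, Derivation.coeFn_coe, polarization_monomial]
  obtain h | h := eq_or_ne (ν b) 0
  · simp [h]
  refine Submodule.smul_mem _ _ (Submodule.subset_span ⟨_, ?_, ?_, rfl⟩)
  · have := Finsupp.sum_mul_tsub_single_add_single (fun _ => 1) (a := a) h
    simp only [one_mul] at this
    omega
  · have := Finsupp.sum_mul_tsub_single_add_single (fun i : Fin (n + 1) => (i : ℕ)) (a := a) h
    omega

theorem polarization_eq_zero_of_lt {a b : Fin (n + 1)} (hw : w < b)
    {p : MvPolynomial (Fin (n + 1)) ℚ} (hp : p ∈ Qspace n k w) : polarization ℚ a b p = 0 := by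
  refine Qspace_le_of_monomial_mem (N := LinearMap.ker (polarization ℚ a b).toLinearMap)
    (fun ν _ hν => ?_) hp
  have : ν b = 0 := by
    by_contra h
    have := Finset.single_le_sum (f := fun i : Fin (n + 1) => (i : ℕ) * ν i) (by simp)
      (Finset.mem_univ b)
    have := Nat.le_mul_of_pos_right (b : ℕ) (Nat.pos_of_ne_zero h)
    omega
  simp [polarization_monomial, this]

theorem Hder_apply_of_mem_Qspace {p : MvPolynomial (Fin (n + 1)) ℚ} (hp : p ∈ Qspace n k w) :
    Hder n p = (2 * w - n * k : ℚ) • p := by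
  refine Module.End.mem_eigenspace_iff.mp <|
    Qspace_le_of_monomial_mem (N := Module.End.eigenspace (Hder n).toLinearMap _)
      (fun ν hk hν => ?_) hp
  rw [Module.End.mem_eigenspace_iff, Derivation.coeFn_coe, Hder, euler_monomial]
  congr 1
  simp only [sub_mul, Finset.sum_sub_distrib, mul_assoc, ← Finset.mul_sum]
  rw [← hk, ← hν]
  push_cast
  ring

theorem Δder_mem_Qspace {p : MvPolynomial (Fin (n + 1)) ℚ} (hp : p ∈ Qspace n k w) :
    Δder n p ∈ Qspace n k (w + 1) := by
  rw [Δder, Derivation.finset_sum_apply]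
  refine Submodule.sum_mem _ fun i _ => ?_
  rw [Derivation.smul_apply]
  exact Submodule.smul_mem _ _ (polarization_mem_Qspace (by simp; omega) hp)

theorem Dder_mem_Qspace {p : MvPolynomial (Fin (n + 1)) ℚ} (hp : p ∈ Qspace n k (w + 1)) :
    Dder n p ∈ Qspace n k w := by
  rw [Dder, Derivation.finset_sum_apply]
  refine Submodule.sum_mem _ fun i _ => ?_
  rw [Derivation.smul_apply]
  exact Submodule.smul_mem _ _ (polarization_mem_Qspace (by simp; omega) hp)

theorem Dder_eq_zero_of_mem_Qspace_zero {p : MvPolynomial (Fin (n + 1)) ℚ}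
    (hp : p ∈ Qspace n k 0) : Dder n p = 0 := by
  rw [Dder, Derivation.finset_sum_apply]
  refine Finset.sum_eq_zero fun i _ => ?_
  rw [Derivation.smul_apply, polarization_eq_zero_of_lt (by simp) hp, smul_zero]

theorem toEnd_Dder_pow_apply_eq_zero {p : MvPolynomial (Fin (n + 1)) ℚ} (hp : p ∈ Qspace n k w) :
    (LieModule.toEnd ℚ _ _ (Dder n) ^ (w + 1)) p = 0 := by
  induction w generalizing p with
  | zero => simpa using Dder_eq_zero_of_mem_Qspace_zero hp
  | succ w ih =>
    rw [pow_succ, Module.End.mul_apply, LieModule.toEnd_apply_apply, Derivation.bracket_eq_fun,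
      ih (Dder_mem_Qspace hp)]

end

/-- `Δ` maps `Q_n(k,m-1)` into `Q_n(k,m)` injectively. -/
theorem Delta_injective_on_Q (n k m : ℕ) (hm : 1 ≤ m) (h : 2 * m ≤ n * k) :
    (∀ I ∈ Qspace n k (m - 1), Δop n I ∈ Qspace n k m) ∧
    (∀ I ∈ Qspace n k (m - 1), Δop n I = 0 → I = 0) := by
  obtain ⟨w, rfl⟩ : ∃ w, m = w + 1 := ⟨m - 1, by omega⟩
  rw [Nat.add_sub_cancel]
  refine ⟨fun I hI => Δop_apply n I ▸ Δder_mem_Qspace hI, fun I hI hΔ => ?_⟩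
  by_contra hI₀
  have hn : n ≠ 0 := by rintro rfl; omega
  have P : (isSl2Triple n hn).HasPrimitiveVectorWith I (2 * w - n * k : ℚ) :=
    ⟨hI₀, Hder_apply_of_mem_Qspace hI, by rwa [Derivation.bracket_eq_fun, ← Δop_apply]⟩
  obtain ⟨j, hj⟩ := P.exists_nat_of_pow_toEnd_f_eq_zero (toEnd_Dder_pow_apply_eq_zero hI)
  have : (2 * (w + 1) : ℚ) ≤ n * k := by exact_mod_cast h
  linarith [j.cast_nonneg (α := ℚ)]
end

section
/- (Additivity lemma of Pak and Panova.) Let k₁, k₂, n : ℕ with k₁ ≥ 2, k₂ ≥ 2, n ≥ 2, at least one of k₁, k₂, n strictly greater than 2, and at least one of k₁, k₂, n even. If the Gaussian coefficients [n+k₁ choose n] and [n+k₂ choose n] are strictly unimodal (i.e., p(k₁,n,m) > p(k₁,n,m−1) for all m with 2 ≤ m and 2m ≤ nk₁, and likewise for k₂), then [n+k₁+k₂ choose n] is strictly unimodal: p(k₁+k₂,n,m) > p(k₁+k₂,n,m−1) for all m with 2 ≤ m and 2m ≤ n(k₁+k₂). -/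
open MvPolynomial

/-!
Following Pak and Panova, `p(k,n,m)` is the dimension of the space `Q(k,m)` of polynomials in
`a₀, …, aₙ` of degree `k` and weight `m` (the weight of `aᵢ` being `i`). The derivations
`D aᵢ = i aᵢ₋₁` and `Δ aᵢ = (n - i) aᵢ₊₁` lower and raise the weight by one and, as for `sl₂`,
`DΔ - ΔD` acts on `Q(k,m)` by the scalar `nk - 2m`. Hence `D : Q(k,m) → Q(k,m-1)` is onto when
`2m ≤ nk`, and `p(k,n,m) - p(k,n,m-1)` is the dimension of the space `S(k,m) = Q(k,m) ∩ ker D`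
of semi-invariants. Since `D` is a derivation, a product of semi-invariants is a semi-invariant,
and it is nonzero when the factors are. So it suffices to write `m = m₁ + m₂` with each `mᵢ`
either `0` (where `a₀ ^ kᵢ` is a semi-invariant) or in the range `2 ≤ mᵢ ≤ nkᵢ/2` of strict
unimodality, which the size and parity conditions allow.
-/

namespace MvPolynomial

variable {σ R : Type*} [CommSemiring R] {φ : MvPolynomial σ R} {w : σ → ℕ} {d : ℕ}

lemma IsWeightedHomogeneous.pderiv_eq_zero_of_lt {i : σ} (h : φ.IsWeightedHomogeneous w d)
    (hi : d < w i) : pderiv i φ = 0 := by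
  ext ν
  rw [coeff_pderiv, coeff_zero]
  by_contra hν
  have hweight := h (left_ne_zero_of_mul hν)
  rw [map_add, Finsupp.weight_single, one_smul] at hweight
  omega

lemma IsWeightedHomogeneous.X_mul_pderiv {i j : σ} {d' : ℕ} (h : φ.IsWeightedHomogeneous w d)
    (hd : d' + w i = d + w j) : (X j * pderiv i φ).IsWeightedHomogeneous w d' := by
  rcases le_or_gt (w i) d with hi | hi
  · have hφ' := h.pderiv (i := i) (n' := d - w i) (by omega)
    convert (isWeightedHomogeneous_X R w j).mul hφ' using 1
    omega
  · rw [h.pderiv_eq_zero_of_lt hi, mul_zero]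
    exact isWeightedHomogeneous_zero R w d'

end MvPolynomial

lemma Nat.exists_split_le_half_of_even_left {A B m : ℕ} (hA : Even A) (hA4 : 4 ≤ A) (hB4 : 4 ≤ B)
    (hA6 : A = 4 → 6 ≤ B) (hm : 2 ≤ m) (hmAB : 2 * m ≤ A + B) :
    ∃ m₁ m₂, m = m₁ + m₂ ∧ (m₁ = 0 ∨ 2 ≤ m₁ ∧ 2 * m₁ ≤ A) ∧ (m₂ = 0 ∨ 2 ≤ m₂ ∧ 2 * m₂ ≤ B) := by
  obtain ⟨a, rfl⟩ := hA
  by_cases hmA : m ≤ a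
  · exact ⟨m, 0, by omega, by omega, by omega⟩
  by_cases hmB : 2 * m ≤ B
  · exact ⟨0, m, by omega, by omega, by omega⟩
  by_cases hma : m = a + 1
  -- `a ≥ 3` here: if `A = 4` then `2 * m = 6 ≤ B`.
  · exact ⟨a - 1, 2, by omega, by omega, by omega⟩
  · exact ⟨a, m - a, by omega, by omega, by omega⟩

lemma Nat.exists_split_le_half {A B m : ℕ} (hev : Even A ∨ Even B) (hA4 : 4 ≤ A) (hB4 : 4 ≤ B)
    (hA6 : A = 4 → 6 ≤ B) (hB6 : B = 4 → 6 ≤ A) (hm : 2 ≤ m) (hmAB : 2 * m ≤ A + B) :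
    ∃ m₁ m₂, m = m₁ + m₂ ∧ (m₁ = 0 ∨ 2 ≤ m₁ ∧ 2 * m₁ ≤ A) ∧ (m₂ = 0 ∨ 2 ≤ m₂ ∧ 2 * m₂ ≤ B) := by
  rcases hev with hA | hB
  · exact Nat.exists_split_le_half_of_even_left hA hA4 hB4 hA6 hm hmAB
  · obtain ⟨m₂, m₁, h, h₂, h₁⟩ := Nat.exists_split_le_half_of_even_left hB hB4 hA4 hB6 hm (by omega)
    exact ⟨m₁, m₂, by omega, h₁, h₂⟩

lemma Nat.six_le_mul_of_mul_eq_four {n k k' : ℕ} (hn : 2 ≤ n) (hk : 2 ≤ k)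
    (hgt : 2 < k ∨ 2 < k' ∨ 2 < n) (h : n * k = 4) : 6 ≤ n * k' := by
  have : 2 * k ≤ n * k := Nat.mul_le_mul_right k hn
  have : n * 2 ≤ n * k := Nat.mul_le_mul_left n hk
  obtain rfl : n = 2 := by omega
  omega

lemma Derivation.finset_sum_apply_s11 {R A M ι : Type*} [CommSemiring R] [CommSemiring A]
    [Algebra R A] [AddCommMonoid M] [Module A M] [Module R M] (s : Finset ι)
    (D : ι → Derivation R A M) (a : A) : (∑ i ∈ s, D i) a = ∑ i ∈ s, D i a := by
  rw [← Derivation.coeFnAddMonoidHom_apply, map_sum, Finset.sum_apply]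
  rfl

open Module in
theorem Submodule.finrank_map_add_finrank_inf_ker {K V V₂ : Type*} [DivisionRing K]
    [AddCommGroup V] [Module K V] [AddCommGroup V₂] [Module K V₂] (f : V →ₗ[K] V₂)
    (W : Submodule K V) [FiniteDimensional K W] :
    finrank K (W.map f) + finrank K (W ⊓ LinearMap.ker f : Submodule K V) = finrank K W := by
  rw [← LinearMap.range_domRestrict, ← map_comap_subtype, finrank_map_subtype_eq,
    ← LinearMap.ker_domRestrict, LinearMap.finrank_range_add_finrank_ker]

section LoweringRaising

open Module

variable {K V : Type*} [Field K] [LinearOrder K] [IsStrictOrderedRing K]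
  [AddCommGroup V] [Module K V] {D Δ : V →ₗ[K] V} {Q : ℕ → Submodule K V} {c : ℕ → K}

variable (hD : ∀ m, ∀ v ∈ Q (m + 1), D v ∈ Q m) (hD₀ : ∀ v ∈ Q 0, D v = 0)
  (hcomm : ∀ m, ∀ v ∈ Q m, D (Δ v) - Δ (D v) = c m • v)

include hcomm in
lemma eq_zero_of_lowering_eq_zero {M : ℕ} (hcM : 0 < c M) {v : V} (hv : v ∈ Q M) (hDv : D v = 0)
    {a : K} (ha : a ≤ 0) (h : D (Δ v) = a • v) : v = 0 := by
  have hcv := hcomm M v hv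
  rw [hDv, map_zero, sub_zero, h] at hcv
  have hsub : (a - c M) • v = 0 := by rw [sub_smul, hcv, sub_self]
  exact (smul_eq_zero.mp hsub).resolve_left (by linarith : a - c M < 0).ne

include hD hD₀ hcomm in
lemma eq_zero_of_lowering_comp_raising_eq_smul {M : ℕ} (hc : ∀ m ≤ M, 0 < c m) {v : V}
    (hv : v ∈ Q M) {a : K} (ha : a ≤ 0) (h : D (Δ v) = a • v) : v = 0 := by
  induction M generalizing v a with
  | zero => exact eq_zero_of_lowering_eq_zero hcomm (hc 0 le_rfl) hv (hD₀ v hv) ha h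
  | succ M ih =>
    have hcM := hc (M + 1) le_rfl
    have hΔD : Δ (D v) = D (Δ v) - c (M + 1) • v := by rw [← hcomm _ v hv, sub_sub_cancel]
    refine eq_zero_of_lowering_eq_zero hcomm hcM hv ?_ ha h
    -- `D v ∈ Q M` is again an eigenvector of `D ∘ Δ`, with eigenvalue `a - c (M + 1) < a`.
    refine ih (fun m hm => hc m (by omega)) (hD M v hv) (a := a - c (M + 1)) (by linarith) ?_
    rw [hΔD, map_sub, map_smul, h, map_smul, sub_smul]

include hD hD₀ hcomm in
lemma map_lowering_eq (hΔ : ∀ m, ∀ v ∈ Q m, Δ v ∈ Q (m + 1)) {M : ℕ}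
    [FiniteDimensional K (Q M)] (hc : ∀ m ≤ M, 0 < c m) : (Q (M + 1)).map D = Q M := by
  refine le_antisymm (Submodule.map_le_iff_le_comap.mpr fun v hv => hD M v hv) fun y hy => ?_
  let T : Q M →ₗ[K] Q M := (D ∘ₗ Δ).restrict fun v hv => hD M _ (hΔ M v hv)
  have hT : Function.Injective T := by
    rw [← LinearMap.ker_eq_bot, Submodule.eq_bot_iff]
    intro x hx
    refine Subtype.ext (eq_zero_of_lowering_comp_raising_eq_smul hD hD₀ hcomm hc x.2 le_rfl ?_)
    simpa [T] using congrArg Subtype.val (LinearMap.mem_ker.mp hx)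
  obtain ⟨x, hx⟩ := LinearMap.injective_iff_surjective.mp hT ⟨y, hy⟩
  exact ⟨Δ x, hΔ M x x.2, congrArg Subtype.val hx⟩

end LoweringRaising

namespace PakPanova

open MvPolynomial Module

variable {n k m : ℕ}

lemma Qspace_eq_restrictSupport (n k m : ℕ) :
    Qspace n k m = restrictSupport ℚ {ν | ν.degree = k ∧ Finsupp.weight Fin.val ν = m} := by
  rw [Qspace, restrictSupport_eq_span]
  congr 1
  ext p
  simp [Finsupp.degree_eq_sum, Finsupp.weight_eq_sum, mul_comm, eq_comm, and_assoc]

lemma mem_Qspace_iff {p : MvPolynomial (Fin (n + 1)) ℚ} :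
    p ∈ Qspace n k m ↔ p.IsHomogeneous k ∧ p.IsWeightedHomogeneous Fin.val m := by
  simp only [Qspace_eq_restrictSupport, mem_restrictSupport_iff, Set.subset_def, IsHomogeneous,
    IsWeightedHomogeneous, Finsupp.degree_eq_weight_one, Finset.mem_coe,
    MvPolynomial.mem_support_iff, Set.mem_ofPred_eq, ← forall_and]
  rfl

variable {p : MvPolynomial (Fin (n + 1)) ℚ}

lemma Dop_apply (p : MvPolynomial (Fin (n + 1)) ℚ) :
    Dop n p = ∑ i : Fin n, ((i : ℚ) + 1) • (X i.castSucc * pderiv i.succ p) := by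
  simp [Dop]

lemma Δop_apply (p : MvPolynomial (Fin (n + 1)) ℚ) :
    Δop n p = ∑ i : Fin n, ((n : ℚ) - i) • (X i.succ * pderiv i.castSucc p) := by
  simp [Δop]

lemma X_mul_pderiv_mem_Qspace {i j : Fin (n + 1)} {m' : ℕ} (hp : p ∈ Qspace n k m)
    (h : m' + i = m + j) : X j * pderiv i p ∈ Qspace n k m' := by
  rw [mem_Qspace_iff] at hp ⊢
  exact ⟨IsWeightedHomogeneous.X_mul_pderiv hp.1 rfl, hp.2.X_mul_pderiv h⟩

lemma Dop_mem_Qspace (hp : p ∈ Qspace n k (m + 1)) : Dop n p ∈ Qspace n k m := by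
  rw [Dop_apply]
  refine Submodule.sum_mem _ fun i _ => Submodule.smul_mem _ _ ?_
  exact X_mul_pderiv_mem_Qspace hp (by rw [Fin.val_succ, Fin.val_castSucc]; omega)

lemma Δop_mem_Qspace (hp : p ∈ Qspace n k m) : Δop n p ∈ Qspace n k (m + 1) := by
  rw [Δop_apply]
  refine Submodule.sum_mem _ fun i _ => Submodule.smul_mem _ _ ?_
  exact X_mul_pderiv_mem_Qspace hp (by rw [Fin.val_succ, Fin.val_castSucc]; omega)

lemma Dop_eq_zero_of_mem_Qspace_zero (hp : p ∈ Qspace n k 0) : Dop n p = 0 := by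
  rw [Dop_apply]
  refine Finset.sum_eq_zero fun i _ => ?_
  rw [(mem_Qspace_iff.mp hp).2.pderiv_eq_zero_of_lt (by simp), mul_zero, smul_zero]

noncomputable def lowering (n : ℕ) :
    Derivation ℚ (MvPolynomial (Fin (n + 1)) ℚ) (MvPolynomial (Fin (n + 1)) ℚ) :=
  ∑ i : Fin n, (((i : ℚ) + 1) • (X i.castSucc : MvPolynomial (Fin (n + 1)) ℚ)) • pderiv i.succ

noncomputable def raising (n : ℕ) :
    Derivation ℚ (MvPolynomial (Fin (n + 1)) ℚ) (MvPolynomial (Fin (n + 1)) ℚ) :=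
  ∑ i : Fin n, (((n : ℚ) - i) • (X i.succ : MvPolynomial (Fin (n + 1)) ℚ)) • pderiv i.castSucc

noncomputable def cartan (n : ℕ) :
    Derivation ℚ (MvPolynomial (Fin (n + 1)) ℚ) (MvPolynomial (Fin (n + 1)) ℚ) :=
  ∑ j : Fin (n + 1), (((n : ℚ) - 2 * (j : ℕ)) • (X j : MvPolynomial (Fin (n + 1)) ℚ)) • pderiv j

lemma coe_lowering : ⇑(lowering n) = Dop n := by
  ext1 p
  simp only [lowering, Derivation.finset_sum_apply_s11, Derivation.smul_apply, smul_eq_mul,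
    smul_mul_assoc, Dop_apply]

lemma coe_raising : ⇑(raising n) = Δop n := by
  ext1 p
  simp only [raising, Derivation.finset_sum_apply_s11, Derivation.smul_apply, smul_eq_mul,
    smul_mul_assoc, Δop_apply]

lemma cartan_apply (p : MvPolynomial (Fin (n + 1)) ℚ) :
    cartan n p = ∑ j : Fin (n + 1), ((n : ℚ) - 2 * (j : ℕ)) • (X j * pderiv j p) := by
  simp only [cartan, Derivation.finset_sum_apply_s11, Derivation.smul_apply, smul_eq_mul,
    smul_mul_assoc]

lemma lowering_X_zero : lowering n (X 0) = 0 := by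
  rw [lowering, Derivation.finset_sum_apply_s11]
  refine Finset.sum_eq_zero fun i _ => ?_
  rw [Derivation.smul_apply, pderiv_X_of_ne (Fin.succ_ne_zero i).symm, smul_zero]

lemma lowering_X_succ (i : Fin n) : lowering n (X i.succ) = ((i : ℚ) + 1) • X i.castSucc := by
  rw [lowering, Derivation.finset_sum_apply_s11, Finset.sum_eq_single i]
  · rw [Derivation.smul_apply, pderiv_X_self, smul_eq_mul, mul_one]
  · intro i' _ hi'
    rw [Derivation.smul_apply, pderiv_X_of_ne (Fin.succ_injective _ |>.ne hi').symm, smul_zero]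
  · simp

lemma raising_X_last : raising n (X (Fin.last n)) = 0 := by
  rw [raising, Derivation.finset_sum_apply_s11]
  refine Finset.sum_eq_zero fun i _ => ?_
  rw [Derivation.smul_apply, pderiv_X_of_ne (Fin.castSucc_lt_last i).ne', smul_zero]

lemma raising_X_castSucc (i : Fin n) :
    raising n (X i.castSucc) = ((n : ℚ) - i) • X i.succ := by
  rw [raising, Derivation.finset_sum_apply_s11, Finset.sum_eq_single i]
  · rw [Derivation.smul_apply, pderiv_X_self, smul_eq_mul, mul_one]
  · intro i' _ hi'
    rw [Derivation.smul_apply, pderiv_X_of_ne (Fin.castSucc_injective _ |>.ne hi').symm,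
      smul_zero]
  · simp

lemma cartan_X (j : Fin (n + 1)) : cartan n (X j) = ((n : ℚ) - 2 * (j : ℕ)) • X j := by
  rw [cartan, Derivation.finset_sum_apply_s11, Finset.sum_eq_single j]
  · rw [Derivation.smul_apply, pderiv_X_self, smul_eq_mul, mul_one]
  · intro j' _ hj'
    rw [Derivation.smul_apply, pderiv_X_of_ne hj'.symm, smul_zero]
  · simp

lemma commutator_lowering_raising : ⁅lowering n, raising n⁆ = cartan n := by
  refine derivation_ext fun j => ?_
  -- At the ends `j = last n` and `j = 0` of the chain the coefficients vanish.
  have hDΔ : lowering n (raising n (X j)) = (((n : ℚ) - (j : ℕ)) * ((j : ℕ) + 1)) • X j := by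
    rcases Fin.eq_castSucc_or_eq_last j with ⟨i, rfl⟩ | rfl
    · rw [raising_X_castSucc, Derivation.map_smul, lowering_X_succ, smul_smul, Fin.val_castSucc]
    · rw [raising_X_last, map_zero, Fin.val_last, sub_self, zero_mul, zero_smul]
  have hΔD : raising n (lowering n (X j)) = (((j : ℕ) : ℚ) * ((n : ℚ) - (j : ℕ) + 1)) • X j := by
    rcases Fin.eq_zero_or_eq_succ j with rfl | ⟨i, rfl⟩
    · rw [lowering_X_zero, map_zero, Fin.val_zero, Nat.cast_zero, zero_mul, zero_smul]
    · rw [lowering_X_succ, Derivation.map_smul, raising_X_castSucc, smul_smul, Fin.val_succ]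
      congr 1
      push_cast
      ring
  rw [Derivation.commutator_apply, hDΔ, hΔD, cartan_X, ← sub_smul]
  congr 1
  ring

lemma cartan_apply_of_mem_Qspace (hp : p ∈ Qspace n k m) :
    cartan n p = ((n : ℚ) * k - 2 * m) • p := by
  obtain ⟨hdeg, hweight⟩ := mem_Qspace_iff.mp hp
  have euler := hdeg.sum_X_mul_pderiv
  have weightedEuler := hweight.sum_weight_X_mul_pderiv
  rw [← Nat.cast_smul_eq_nsmul ℚ] at euler weightedEuler
  simp only [← Nat.cast_smul_eq_nsmul ℚ (Fin.val _)] at weightedEuler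
  rw [cartan_apply, sub_smul, mul_smul, mul_smul, ← euler, ← weightedEuler, Finset.smul_sum,
    Finset.smul_sum, ← Finset.sum_sub_distrib]
  simp only [sub_smul, mul_smul]

lemma Dop_Δop_sub_Δop_Dop (hp : p ∈ Qspace n k m) :
    Dop n (Δop n p) - Δop n (Dop n p) = ((n : ℚ) * k - 2 * m) • p := by
  rw [← coe_lowering, ← coe_raising, ← Derivation.commutator_apply, commutator_lowering_raising,
    cartan_apply_of_mem_Qspace hp]

lemma mul_mem_Sspace {k₁ m₁ k₂ m₂ : ℕ} {I J : MvPolynomial (Fin (n + 1)) ℚ}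
    (hI : I ∈ Sspace n k₁ m₁) (hJ : J ∈ Sspace n k₂ m₂) :
    I * J ∈ Sspace n (k₁ + k₂) (m₁ + m₂) := by
  obtain ⟨hIQ, hID : Dop n I = 0⟩ := Submodule.mem_inf.mp hI
  obtain ⟨hJQ, hJD : Dop n J = 0⟩ := Submodule.mem_inf.mp hJ
  rw [mem_Qspace_iff] at hIQ hJQ
  refine ⟨mem_Qspace_iff.mpr ⟨hIQ.1.mul hJQ.1, hIQ.2.mul hJQ.2⟩, ?_⟩
  change Dop n (I * J) = 0
  rw [← coe_lowering, Derivation.leibniz, coe_lowering, hID, hJD, smul_zero, smul_zero, add_zero]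

lemma Sspace_mul_ne_bot {k₁ m₁ k₂ m₂ : ℕ} (h₁ : Sspace n k₁ m₁ ≠ ⊥) (h₂ : Sspace n k₂ m₂ ≠ ⊥) :
    Sspace n (k₁ + k₂) (m₁ + m₂) ≠ ⊥ := by
  obtain ⟨I, hI, hI0⟩ := Submodule.ne_bot_iff _ |>.mp h₁
  obtain ⟨J, hJ, hJ0⟩ := Submodule.ne_bot_iff _ |>.mp h₂
  exact Submodule.ne_bot_iff _ |>.mpr ⟨I * J, mul_mem_Sspace hI hJ, mul_ne_zero hI0 hJ0⟩

lemma Sspace_zero_ne_bot : Sspace n k 0 ≠ ⊥ := by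
  have hweight : Finsupp.weight Fin.val (Finsupp.single (0 : Fin (n + 1)) k) = 0 := by
    rw [Finsupp.weight_single, Fin.val_zero, smul_zero]
  have hQ : monomial (Finsupp.single 0 k) (1 : ℚ) ∈ Qspace n k 0 :=
    mem_Qspace_iff.mpr ⟨isHomogeneous_monomial _ (Finsupp.degree_single _ _),
      isWeightedHomogeneous_monomial _ _ _ hweight⟩
  refine Submodule.ne_bot_iff _ |>.mpr ⟨_, ⟨hQ, Dop_eq_zero_of_mem_Qspace_zero hQ⟩, ?_⟩
  simp

/-- The monomial `∏ aᵢ ^ νᵢ` encodes the partition with `νᵢ` parts equal to `i` for `1 ≤ i ≤ n`;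
the exponent `ν₀` pads the number of parts up to the degree. -/
def partsOf (ν : Fin (n + 1) →₀ ℕ) : Multiset ℕ :=
  ∑ i : Fin n, Multiset.replicate (ν i.succ) ((i : ℕ) + 1)

noncomputable def exponentsOf (n k : ℕ) (s : Multiset ℕ) : Fin (n + 1) →₀ ℕ :=
  Finsupp.equivFunOnFinite.symm
    (Fin.cons (k - Multiset.card s) fun i : Fin n => s.count ((i : ℕ) + 1))

lemma degree_eq_add_card_partsOf (ν : Fin (n + 1) →₀ ℕ) :
    ν.degree = ν 0 + Multiset.card (partsOf ν) := by
  simp [Finsupp.degree_eq_sum, Fin.sum_univ_succ, partsOf, Multiset.card_sum]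

lemma weight_eq_sum_partsOf (ν : Fin (n + 1) →₀ ℕ) :
    Finsupp.weight Fin.val ν = (partsOf ν).sum := by
  simp [Finsupp.weight_eq_sum, Fin.sum_univ_succ, partsOf, Multiset.sum_sum]

lemma mem_partsOf {ν : Fin (n + 1) →₀ ℕ} {x : ℕ} (hx : x ∈ partsOf ν) : 0 < x ∧ x ≤ n := by
  obtain ⟨i, -, hi⟩ := Multiset.mem_sum.mp hx
  rw [Multiset.eq_of_mem_replicate hi]
  omega

lemma count_partsOf (ν : Fin (n + 1) →₀ ℕ) (i : Fin n) :
    (partsOf ν).count ((i : ℕ) + 1) = ν i.succ := by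
  simp [partsOf, Multiset.count_sum', Multiset.count_replicate, Fin.val_inj]

lemma partsOf_exponentsOf {s : Multiset ℕ} (hs : ∀ x ∈ s, 0 < x ∧ x ≤ n) :
    partsOf (exponentsOf n k s) = s := by
  ext a
  by_cases ha : 0 < a ∧ a ≤ n
  · obtain ⟨i, rfl⟩ : ∃ i : Fin n, (i : ℕ) + 1 = a := ⟨⟨a - 1, by omega⟩, Nat.sub_add_cancel ha.1⟩
    simp [count_partsOf, exponentsOf]
  · rw [Multiset.count_eq_zero.mpr fun h => ha (mem_partsOf h),
      Multiset.count_eq_zero.mpr fun h => ha (hs a h)]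

lemma card_exponents_eq_pRect (n k m : ℕ) :
    Nat.card {ν : Fin (n + 1) →₀ ℕ | ν.degree = k ∧ Finsupp.weight Fin.val ν = m} =
      pRect k n m := by
  rw [pRect, ← Fintype.card_subtype, ← Nat.card_eq_fintype_card]
  refine Nat.card_eq_of_bijective (fun ν => ⟨⟨partsOf ν.1, fun hx => (mem_partsOf hx).1,
    by rw [← weight_eq_sum_partsOf, ν.2.2]⟩, ?_, fun x hx => (mem_partsOf hx).2⟩) ⟨?_, ?_⟩
  · have hdeg : ν.1.degree = k := ν.2.1
    have := degree_eq_add_card_partsOf ν.1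
    show Multiset.card (partsOf ν.1) ≤ k
    omega
  · rintro ⟨ν, hν⟩ ⟨ν', hν'⟩ h
    have hparts : partsOf ν = partsOf ν' := congrArg (fun P => P.1.parts) h
    refine Subtype.ext (Finsupp.ext fun j => ?_)
    cases j using Fin.cases with
    | zero =>
      have h₀ := degree_eq_add_card_partsOf ν
      have h₀' := degree_eq_add_card_partsOf ν'
      rw [hν.1, hparts] at h₀
      rw [hν'.1] at h₀'
      show ν 0 = ν' 0
      omega
    | succ i => rw [← count_partsOf, hparts, count_partsOf]
  · rintro ⟨P, hcard, hle⟩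
    have hparts : partsOf (exponentsOf n k P.parts) = P.parts :=
      partsOf_exponentsOf fun x hx => ⟨P.parts_pos hx, hle x hx⟩
    refine ⟨⟨exponentsOf n k P.parts, ?_, ?_⟩, Subtype.ext (Nat.Partition.ext hparts)⟩
    · rw [degree_eq_add_card_partsOf, hparts]
      simp only [exponentsOf, Finsupp.equivFunOnFinite_symm_apply_apply, Fin.cons_zero]
      omega
    · rw [weight_eq_sum_partsOf, hparts, P.parts_sum]

instance (n k m : ℕ) : FiniteDimensional ℚ (Qspace n k m) := by
  rw [Qspace_eq_restrictSupport]
  have : Finite {ν : Fin (n + 1) →₀ ℕ | ν.degree = k ∧ Finsupp.weight Fin.val ν = m} :=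
    ((Finsupp.finite_of_degree_eq k).subset fun ν hν => hν.1).to_subtype
  exact Module.Finite.of_basis (basisRestrictSupport ℚ _)

lemma finrank_Qspace (n k m : ℕ) : finrank ℚ (Qspace n k m) = pRect k n m := by
  rw [Qspace_eq_restrictSupport, finrank_eq_nat_card_basis (basisRestrictSupport ℚ _),
    card_exponents_eq_pRect]

lemma pRect_succ_eq (h : 2 * (m + 1) ≤ n * k) :
    pRect k n (m + 1) = pRect k n m + finrank ℚ (Sspace n k (m + 1)) := by
  have hc : ∀ j ≤ m, (0 : ℚ) < n * k - 2 * j := fun j hj => by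
    have : ((2 * j : ℕ) : ℚ) < (n * k : ℕ) := by exact_mod_cast (by omega : 2 * j < n * k)
    push_cast at this
    linarith
  have hmap : (Qspace n k (m + 1)).map (Dop n) = Qspace n k m :=
    map_lowering_eq (fun _ _ => Dop_mem_Qspace) (fun _ => Dop_eq_zero_of_mem_Qspace_zero)
      (fun _ _ => Dop_Δop_sub_Δop_Dop) (fun _ _ => Δop_mem_Qspace) hc
  rw [← finrank_Qspace, ← finrank_Qspace, Sspace, ← hmap,
    Submodule.finrank_map_add_finrank_inf_ker]

lemma pRect_pred_lt_iff (hm : 1 ≤ m) (h : 2 * m ≤ n * k) :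
    pRect k n (m - 1) < pRect k n m ↔ Sspace n k m ≠ ⊥ := by
  obtain ⟨m, rfl⟩ : ∃ t, m = t + 1 := ⟨m - 1, by omega⟩
  have : FiniteDimensional ℚ (Sspace n k (m + 1)) := Submodule.finiteDimensional_of_le inf_le_left
  rw [pRect_succ_eq h, Nat.add_sub_cancel, Nat.lt_add_right_iff_pos, Nat.pos_iff_ne_zero, Ne,
    Submodule.finrank_eq_zero]

lemma Sspace_ne_bot (hmono : ∀ m, 2 ≤ m → 2 * m ≤ n * k → pRect k n (m - 1) < pRect k n m)
    (hm : m = 0 ∨ 2 ≤ m ∧ 2 * m ≤ n * k) : Sspace n k m ≠ ⊥ := by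
  rcases hm with rfl | ⟨hm, hmk⟩
  · exact Sspace_zero_ne_bot
  · exact (pRect_pred_lt_iff (by omega) hmk).mp (hmono m hm hmk)

end PakPanova

/-- the additivity lemma of Pak and Panova. -/
theorem pak_panova_additivity (k₁ k₂ n : ℕ) (hk₁ : 2 ≤ k₁) (hk₂ : 2 ≤ k₂) (hn : 2 ≤ n)
    (hgt : 2 < k₁ ∨ 2 < k₂ ∨ 2 < n) (hev : Even k₁ ∨ Even k₂ ∨ Even n)
    (h1 : ∀ m : ℕ, 2 ≤ m → 2 * m ≤ n * k₁ → pRect k₁ n (m - 1) < pRect k₁ n m)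
    (h2 : ∀ m : ℕ, 2 ≤ m → 2 * m ≤ n * k₂ → pRect k₂ n (m - 1) < pRect k₂ n m) :
    ∀ m : ℕ, 2 ≤ m → 2 * m ≤ n * (k₁ + k₂) →
      pRect (k₁ + k₂) n (m - 1) < pRect (k₁ + k₂) n m := by
  intro m hm hmK
  have hev' : Even (n * k₁) ∨ Even (n * k₂) := by
    rcases hev with h | h | h <;> simp [Nat.even_mul, h]
  obtain ⟨m₁, m₂, rfl, hm₁, hm₂⟩ := Nat.exists_split_le_half hev' (Nat.mul_le_mul hn hk₁)
    (Nat.mul_le_mul hn hk₂) (Nat.six_le_mul_of_mul_eq_four hn hk₁ hgt)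
    (Nat.six_le_mul_of_mul_eq_four hn hk₂ (by tauto)) hm (by rwa [mul_add] at hmK)
  exact (PakPanova.pRect_pred_lt_iff (by omega) hmK).mpr <| PakPanova.Sspace_mul_ne_bot
    (PakPanova.Sspace_ne_bot h1 hm₁) (PakPanova.Sspace_ne_bot h2 hm₂)
end
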